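/- arXiv:1504.07132 — 8 statements merged into one kernel-verified Lean document; each statement's English description precedes it below -/
import Mathlib

section
/- Let A and B be nonempty finite sets of nonnegative integers. Then |A + B| ≤ |A|·|B|, and equality |A + B| = |A|·|B| holds if and only if the difference sets D_A and D_B are disjoint. -/
/-! A sum `a + b` with `a ∈ A`, `b ∈ B` can be written in two ways, `a + b = a' + b'` with
`a < a'`, exactly when `a' - a = b - b'` is a common positive difference of `A` and `B`.
Hence the addition map `A × B → A + B`, which always gives `|A + B| ≤ |A| |B|`, is injective
iff `D_A` and `D_B` are disjoint. -/

open Finset Pointwise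

/-- The difference set of a finset of naturals:
the set of positive differences of distinct elements. -/
def diffSet (A : Finset ℕ) : Finset ℕ :=
  ((A ×ˢ A).filter fun p => p.2 < p.1).image fun p => p.1 - p.2

lemma mem_diffSet {A : Finset ℕ} {d : ℕ} :
    d ∈ diffSet A ↔ ∃ a ∈ A, ∃ b ∈ A, b < a ∧ a - b = d := by
  simp only [diffSet, mem_image, mem_filter, mem_product, Prod.exists]
  constructor
  · rintro ⟨a, b, ⟨⟨ha, hb⟩, hlt⟩, hd⟩
    exact ⟨a, ha, b, hb, hlt, hd⟩
  · rintro ⟨a, ha, b, hb, hlt, hd⟩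
    exact ⟨a, b, ⟨⟨ha, hb⟩, hlt⟩, hd⟩

lemma sub_mem_diffSet {A : Finset ℕ} {a b : ℕ} (ha : a ∈ A) (hb : b ∈ A) (hlt : b < a) :
    a - b ∈ diffSet A :=
  mem_diffSet.2 ⟨a, ha, b, hb, hlt, rfl⟩

lemma not_disjoint_diffSet_of_add_eq_add {A B : Finset ℕ} {a a' b b' : ℕ}
    (ha : a ∈ A) (ha' : a' ∈ A) (hb : b ∈ B) (hb' : b' ∈ B)
    (hlt : a < a') (hsum : a + b = a' + b') :
    ¬Disjoint (diffSet A) (diffSet B) := by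
  have hdA : a' - a ∈ diffSet A := sub_mem_diffSet ha' ha hlt
  have hdB : a' - a ∈ diffSet B := by
    convert sub_mem_diffSet hb hb' (by omega) using 1
    omega
  exact Finset.not_disjoint_iff.2 ⟨_, hdA, hdB⟩

lemma exists_add_eq_add_of_not_disjoint_diffSet {A B : Finset ℕ}
    (h : ¬Disjoint (diffSet A) (diffSet B)) :
    ∃ a ∈ A, ∃ a' ∈ A, ∃ b ∈ B, ∃ b' ∈ B, a < a' ∧ a + b = a' + b' := by
  obtain ⟨d, hdA, hdB⟩ := Finset.not_disjoint_iff.1 h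
  obtain ⟨a', ha', a, ha, hlt, rfl⟩ := mem_diffSet.1 hdA
  obtain ⟨b, hb, b', hb', hlt', hd⟩ := mem_diffSet.1 hdB
  exact ⟨a, ha, a', ha', b, hb, b', hb', hlt, by omega⟩

lemma injOn_add_iff_disjoint_diffSet (A B : Finset ℕ) :
    (A ×ˢ B : Set (ℕ × ℕ)).InjOn (fun p => p.1 + p.2) ↔ Disjoint (diffSet A) (diffSet B) := by
  constructor
  · intro hinj
    by_contra hdisj
    obtain ⟨a, ha, a', ha', b, hb, b', hb', hlt, hsum⟩ :=
      exists_add_eq_add_of_not_disjoint_diffSet hdisj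
    have : (a, b) = (a', b') := hinj (Set.mk_mem_prod ha hb) (Set.mk_mem_prod ha' hb') hsum
    exact hlt.ne (congrArg Prod.fst this)
  · rintro hdisj ⟨a, b⟩ ⟨ha, hb⟩ ⟨a', b'⟩ ⟨ha', hb'⟩ (hsum : a + b = a' + b')
    rcases lt_trichotomy a a' with hlt | rfl | hlt
    · exact absurd hdisj (not_disjoint_diffSet_of_add_eq_add ha ha' hb hb' hlt hsum)
    · simp only [Prod.mk.injEq, true_and]
      omega
    · exact absurd hdisj (not_disjoint_diffSet_of_add_eq_add ha' ha hb' hb hlt hsum.symm)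

theorem sumset_card_le_and_eq_iff_disjoint_diffSet_general (A B : Finset ℕ) :
    (A + B).card ≤ A.card * B.card ∧
      ((A + B).card = A.card * B.card ↔ Disjoint (diffSet A) (diffSet B)) :=
  ⟨card_add_le, card_add_iff.trans (injOn_add_iff_disjoint_diffSet A B)⟩

/-- For nonempty finite sets `A`, `B` of nonnegative integers, `|A + B| ≤ |A|·|B|`, and
equality holds iff the difference sets `D_A` and `D_B` are disjoint. -/
theorem sumset_card_le_and_eq_iff_disjoint_diffSet (A B : Finset ℕ)
    (hA : A.Nonempty) (hB : B.Nonempty) :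
    (A + B).card ≤ A.card * B.card ∧
      ((A + B).card = A.card * B.card ↔ Disjoint (diffSet A) (diffSet B)) :=
  sumset_card_le_and_eq_iff_disjoint_diffSet_general A B
end

section
/- Let G₁ and G₂ be simple graphs on finite vertex sets. The disjoint union G₁ ∪ G₂ (the graph on the disjoint sum of the two vertex sets whose edges are exactly the edges of G₁ together with the edges of G₂) admits a strong integer additive set-indexer if and only if both G₁ and G₂ admit strong integer additive set-indexers. -/
open Finset Pointwise

/-- The edge labeling induced by a vertex set-labeling `f`,
assigning to the edge `uv` the sumset `f(u) + f(v)`. -/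
def edgeLabel {V : Type*} (f : V → Finset ℕ) : Sym2 V → Finset ℕ :=
  Sym2.lift ⟨fun u v => f u + f v, fun u v => add_comm (f u) (f v)⟩

/-- `f` is a strong integer additive set-indexer of `G`: an injective assignment of
nonempty finite sets of nonnegative integers to the vertices whose induced edge labeling
is injective on the edge set and satisfies `|f(u) + f(v)| = |f(u)|·|f(v)|` on edges. -/
def IsStrongIASI {V : Type*} (G : SimpleGraph V) (f : V → Finset ℕ) : Prop :=
  (∀ v, (f v).Nonempty) ∧ Function.Injective f ∧
    Set.InjOn (edgeLabel f) G.edgeSet ∧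
    ∀ u v, G.Adj u v → (f u + f v).card = (f u).card * (f v).card

open SimpleGraph

/-! Restricting a strong IASI of `G₁ ⊕ G₂` along the embeddings of the summands gives strong
IASIs of `G₁` and `G₂`. Conversely, translate the labels of `G₂` by a constant `M` exceeding
every label of `G₁`. Translation preserves the strong IASI property, since it turns every edge
sumset into its translate by `2M`. After it, every `G₁`-label lies entirely below every
`G₂`-label, so no vertex label and no edge sumset of `G₁` can coincide with one of `G₂`. -/

lemma Finset.image_add_right_add_image_add_right {α : Type*} [AddCommSemigroup α] [DecidableEq α]
    (s t : Finset α) (c : α) :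
    s.image (· + c) + t.image (· + c) = (s + t).image (· + (c + c)) :=
  (image_image₂_distrib fun a b => add_add_add_comm a b c c).symm

lemma Finset.exists_forall_mem_lt {ι : Type*} [Finite ι] (s : ι → Finset ℕ) :
    ∃ M, ∀ i, ∀ x ∈ s i, x < M := by
  obtain ⟨M, hM⟩ := (Set.finite_iUnion fun i => (s i).finite_toSet).bddAbove
  exact ⟨M + 1, fun i x hx => Nat.lt_succ_of_le (hM (Set.mem_iUnion_of_mem i hx))⟩

namespace Sym2

lemma disjoint_image_map_inl_inr {V W : Type*} (s : Set (Sym2 V)) (t : Set (Sym2 W)) :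
    Disjoint (Sym2.map Sum.inl '' s) (Sym2.map Sum.inr '' t) := by
  refine Set.disjoint_left.2 ?_
  rintro _ ⟨e, -, rfl⟩ ⟨e', -, h⟩
  induction e using Sym2.ind
  induction e' using Sym2.ind
  simp at h

end Sym2

namespace SimpleGraph

variable {V W : Type*} {G : SimpleGraph V} {H : SimpleGraph W}

lemma edgeSet_sum :
    (G ⊕g H).edgeSet = Sym2.map Sum.inl '' G.edgeSet ∪ Sym2.map Sum.inr '' H.edgeSet := by
  refine subset_antisymm (fun e he => ?_) (Set.union_subset ?_ ?_)
  · induction e using Sym2.ind with | _ u v =>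
    rcases u with u | u <;> rcases v with v | v
    · exact .inl ⟨s(u, v), he, rfl⟩
    · simp at he
    · simp at he
    · exact .inr ⟨s(u, v), he, rfl⟩
  · rintro _ ⟨e, he, rfl⟩
    exact Embedding.sumInl.map_mem_edgeSet_iff.2 he
  · rintro _ ⟨e, he, rfl⟩
    exact Embedding.sumInr.map_mem_edgeSet_iff.2 he

end SimpleGraph

lemma edgeLabel_sym2Map {V W : Type*} (f : W → Finset ℕ) (φ : V → W) (e : Sym2 V) :
    edgeLabel f (e.map φ) = edgeLabel (f ∘ φ) e := by
  induction e using Sym2.ind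
  rfl

lemma edgeLabel_image_add_right {V : Type*} (f : V → Finset ℕ) (c : ℕ) (e : Sym2 V) :
    edgeLabel (fun v => (f v).image (· + c)) e = (edgeLabel f e).image (· + (c + c)) := by
  induction e using Sym2.ind
  exact image_add_right_add_image_add_right _ _ c

lemma edgeLabel_ne_of_forall_lt {V W : Type*} {f : V → Finset ℕ} {g : W → Finset ℕ}
    (hf : ∀ v, (f v).Nonempty) (hlt : ∀ v w, ∀ x ∈ f v, ∀ y ∈ g w, x < y) (e : Sym2 V)
    (e' : Sym2 W) : edgeLabel f e ≠ edgeLabel g e' := by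
  induction e using Sym2.ind with | _ a b =>
  induction e' using Sym2.ind with | _ c d =>
  intro h
  obtain ⟨x, hx⟩ := hf a
  obtain ⟨y, hy⟩ := hf b
  have hxy : x + y ∈ edgeLabel g s(c, d) := h ▸ add_mem_add hx hy
  obtain ⟨z, hz, w, hw, hzw⟩ := mem_add.1 hxy
  have := hlt a c x hx z hz
  have := hlt b d y hy w hw
  omega

namespace IsStrongIASI

variable {V W : Type*} {G : SimpleGraph V} {H : SimpleGraph W}

lemma comp_embedding {f : W → Finset ℕ} (hf : IsStrongIASI H f) (φ : G ↪g H) :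
    IsStrongIASI G (f ∘ φ) := by
  obtain ⟨hne, hinj, hlab, hcard⟩ := hf
  refine ⟨fun v => hne (φ v), hinj.comp φ.injective, fun e he e' he' h => ?_,
    fun u v huv => hcard _ _ (φ.map_adj_iff.2 huv)⟩
  rw [← edgeLabel_sym2Map, ← edgeLabel_sym2Map] at h
  exact Sym2.map.injective φ.injective
    (hlab (φ.map_mem_edgeSet_iff.2 he) (φ.map_mem_edgeSet_iff.2 he') h)

lemma image_add_right {f : V → Finset ℕ} (hf : IsStrongIASI G f) (c : ℕ) :
    IsStrongIASI G (fun v => (f v).image (· + c)) := by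
  obtain ⟨hne, hinj, hlab, hcard⟩ := hf
  refine ⟨fun v => (hne v).image _, (image_injective (add_left_injective c)).comp hinj, ?_, ?_⟩
  · have := (image_injective (add_left_injective (c + c))).comp_injOn hlab
    simpa only [Set.InjOn, Function.comp_apply, edgeLabel_image_add_right] using this
  · intro u v huv
    simp only [image_add_right_add_image_add_right,
      card_image_of_injective _ (add_left_injective _), hcard u v huv]

lemma sumElim {f : V → Finset ℕ} {g : W → Finset ℕ} (hf : IsStrongIASI G f)
    (hg : IsStrongIASI H g) (hlt : ∀ v w, ∀ x ∈ f v, ∀ y ∈ g w, x < y) :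
    IsStrongIASI (G ⊕g H) (Sum.elim f g) := by
  obtain ⟨hne, hinj, hlab, hcard⟩ := hf
  obtain ⟨hne', hinj', hlab', hcard'⟩ := hg
  have hfg : ∀ v w, f v ≠ g w := fun v w h => by
    obtain ⟨x, hx⟩ := hne v
    exact (hlt v w x hx x (h ▸ hx)).false
  refine ⟨Sum.forall.2 ⟨hne, hne'⟩, hinj.sumElim hinj' hfg, ?_, ?_⟩
  · rw [SimpleGraph.edgeSet_sum, Set.injOn_union]
    · refine ⟨?_, ?_, ?_⟩
      · refine Set.InjOn.image_of_comp fun e he e' he' h => hlab he he' ?_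
        simpa only [Function.comp_apply, edgeLabel_sym2Map, Sum.elim_comp_inl] using h
      · refine Set.InjOn.image_of_comp fun e he e' he' h => hlab' he he' ?_
        simpa only [Function.comp_apply, edgeLabel_sym2Map, Sum.elim_comp_inr] using h
      · rintro _ ⟨e, -, rfl⟩ _ ⟨e', -, rfl⟩
        simpa only [edgeLabel_sym2Map, Sum.elim_comp_inl, Sum.elim_comp_inr]
          using edgeLabel_ne_of_forall_lt hne hlt e e'
    · exact Sym2.disjoint_image_map_inl_inr _ _
  · rintro (u | u) (v | v) huv
    · exact hcard u v huv
    · simp at huv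
    · simp at huv
    · exact hcard' u v huv

end IsStrongIASI

theorem sum_admits_strongIASI_iff_general {V₁ V₂ : Type*} [Fintype V₁]
    (G₁ : SimpleGraph V₁) (G₂ : SimpleGraph V₂) :
    (∃ f : V₁ ⊕ V₂ → Finset ℕ, IsStrongIASI (G₁ ⊕g G₂) f) ↔
      (∃ f₁ : V₁ → Finset ℕ, IsStrongIASI G₁ f₁) ∧
        (∃ f₂ : V₂ → Finset ℕ, IsStrongIASI G₂ f₂) := by
  refine ⟨fun ⟨f, hf⟩ => ⟨⟨_, hf.comp_embedding Embedding.sumInl⟩,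
    ⟨_, hf.comp_embedding Embedding.sumInr⟩⟩, ?_⟩
  rintro ⟨⟨f₁, hf₁⟩, ⟨f₂, hf₂⟩⟩
  obtain ⟨M, hM⟩ := exists_forall_mem_lt f₁
  refine ⟨_, hf₁.sumElim (hf₂.image_add_right M) fun u v x hx y hy => ?_⟩
  obtain ⟨z, -, rfl⟩ := mem_image.1 hy
  exact (hM u x hx).trans_le (Nat.le_add_left M z)

/-- The disjoint union `G₁ ∪ G₂` admits a strong integer additive set-indexer iff
both `G₁` and `G₂` admit strong integer additive set-indexers. -/
theorem sum_admits_strongIASI_iff {V₁ V₂ : Type*} [Fintype V₁] [Fintype V₂]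
    (G₁ : SimpleGraph V₁) (G₂ : SimpleGraph V₂) :
    (∃ f : V₁ ⊕ V₂ → Finset ℕ, IsStrongIASI (G₁ ⊕g G₂) f) ↔
      (∃ f₁ : V₁ → Finset ℕ, IsStrongIASI G₁ f₁) ∧
        (∃ f₂ : V₂ → Finset ℕ, IsStrongIASI G₂ f₂) :=
  sum_admits_strongIASI_iff_general G₁ G₂
end

section
/- Let G₁ and G₂ be simple graphs on disjoint finite vertex sets, let f₁ be a strong integer additive set-labeling of G₁ and f₂ a strong integer additive set-labeling of G₂, and suppose the combined labeling f (equal to f₁ on V(G₁) and f₂ on V(G₂)) is injective. Then f is a strong integer additive set-labeling of the join G₁ + G₂ (the graph containing all edges of G₁, all edges of G₂, and all edges between V(G₁) and V(G₂)) if and only if D_{f₁(u)} ∩ D_{f₂(v)} = ∅ for every vertex u of G₁ and every vertex v of G₂. -/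
open Finset Pointwise

/-- `f` is a strong integer additive set-labeling of `G`. -/
def IsStrongIASL {V : Type*} (G : SimpleGraph V) (f : V → Finset ℕ) : Prop :=
  (∀ v, (f v).Nonempty) ∧ Function.Injective f ∧
    ∀ u v, G.Adj u v → (f u + f v).card = (f u).card * (f v).card

/-- The join `G₁ + G₂` of two graphs on disjoint vertex sets: all edges of `G₁`,
all edges of `G₂`, and all edges between `V(G₁)` and `V(G₂)`. -/
def joinGraph {V₁ V₂ : Type*} (G₁ : SimpleGraph V₁) (G₂ : SimpleGraph V₂) :
    SimpleGraph (V₁ ⊕ V₂) :=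
  (G₁ ⊕g G₂) ⊔ completeBipartiteGraph V₁ V₂

lemma disjoint_diffSet_iff {A B : Finset ℕ} :
    Disjoint (diffSet A) (diffSet B) ↔
      ∀ a ∈ A, ∀ a' ∈ A, ∀ b ∈ B, ∀ b' ∈ B, a + b = a' + b' → a = a' := by
  constructor
  · intro h
    have no_lt : ∀ a ∈ A, ∀ a' ∈ A, ∀ b ∈ B, ∀ b' ∈ B, a + b = a' + b' → ¬a < a' := by
      intro a ha a' ha' b hb b' hb' hsum hlt
      exact disjoint_left.1 h (mem_diffSet.2 ⟨a', ha', a, ha, hlt, rfl⟩)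
        (mem_diffSet.2 ⟨b, hb, b', hb', by omega, by omega⟩)
    intro a ha a' ha' b hb b' hb' hsum
    exact le_antisymm (not_lt.1 (no_lt a' ha' a ha b' hb' b hb hsum.symm))
      (not_lt.1 (no_lt a ha a' ha' b hb b' hb' hsum))
  · intro h
    refine disjoint_left.2 fun d hdA hdB => ?_
    obtain ⟨a', ha', a, ha, hlt, rfl⟩ := mem_diffSet.1 hdA
    obtain ⟨b, hb, b', hb', -, hd⟩ := mem_diffSet.1 hdB
    have := h a ha a' ha' b hb b' hb' (by omega)
    omega

theorem card_add_eq_mul_iff_disjoint_diffSet (A B : Finset ℕ) :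
    (A + B).card = A.card * B.card ↔ Disjoint (diffSet A) (diffSet B) := by
  rw [card_add_iff, disjoint_diffSet_iff]
  constructor
  · intro h a ha a' ha' b hb b' hb' hsum
    exact congrArg Prod.fst (h (Set.mk_mem_prod ha hb) (Set.mk_mem_prod ha' hb') hsum)
  · rintro h ⟨a, b⟩ ⟨ha, hb⟩ ⟨a', b'⟩ ⟨ha', hb'⟩ (hsum : a + b = a' + b')
    obtain rfl := h a ha a' ha' b hb b' hb' hsum
    rw [add_left_cancel hsum]

section joinGraph

variable {V₁ V₂ : Type*} {G₁ : SimpleGraph V₁} {G₂ : SimpleGraph V₂}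

@[simp]
lemma joinGraph_adj_inl_inl {u v : V₁} :
    (joinGraph G₁ G₂).Adj (.inl u) (.inl v) ↔ G₁.Adj u v := by
  simp [joinGraph]

@[simp]
lemma joinGraph_adj_inr_inr {u v : V₂} :
    (joinGraph G₁ G₂).Adj (.inr u) (.inr v) ↔ G₂.Adj u v := by
  simp [joinGraph]

@[simp]
lemma joinGraph_adj_inl_inr (u : V₁) (v : V₂) : (joinGraph G₁ G₂).Adj (.inl u) (.inr v) := by
  simp [joinGraph]

end joinGraph

theorem strongIASL_join_iff_general {V₁ V₂ : Type*}
    (G₁ : SimpleGraph V₁) (G₂ : SimpleGraph V₂)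
    (f₁ : V₁ → Finset ℕ) (f₂ : V₂ → Finset ℕ)
    (h₁ : IsStrongIASL G₁ f₁) (h₂ : IsStrongIASL G₂ f₂)
    (hinj : Function.Injective (Sum.elim f₁ f₂)) :
    IsStrongIASL (joinGraph G₁ G₂) (Sum.elim f₁ f₂) ↔
      ∀ (u : V₁) (v : V₂), Disjoint (diffSet (f₁ u)) (diffSet (f₂ v)) := by
  constructor
  · intro hs u v
    exact (card_add_eq_mul_iff_disjoint_diffSet _ _).1
      (hs.2.2 (.inl u) (.inr v) (joinGraph_adj_inl_inr u v))
  · intro hdisj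
    refine ⟨Sum.forall.2 ⟨h₁.1, h₂.1⟩, hinj, ?_⟩
    rintro (u | u) (v | v) hadj
    · exact h₁.2.2 u v (joinGraph_adj_inl_inl.1 hadj)
    · exact (card_add_eq_mul_iff_disjoint_diffSet _ _).2 (hdisj u v)
    · rw [Sum.elim_inr, Sum.elim_inl, add_comm, mul_comm]
      exact (card_add_eq_mul_iff_disjoint_diffSet _ _).2 (hdisj v u)
    · exact h₂.2.2 u v (joinGraph_adj_inr_inr.1 hadj)

/-- Given strong IASLs `f₁` of `G₁` and `f₂` of `G₂` whose combination is injective,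
the combined labeling is a strong IASL of the join `G₁ + G₂` iff the difference set of
the set-label of every vertex of `G₁` is disjoint from the difference set of the
set-label of every vertex of `G₂`. -/
theorem strongIASL_join_iff {V₁ V₂ : Type*} [Fintype V₁] [Fintype V₂]
    (G₁ : SimpleGraph V₁) (G₂ : SimpleGraph V₂)
    (f₁ : V₁ → Finset ℕ) (f₂ : V₂ → Finset ℕ)
    (h₁ : IsStrongIASL G₁ f₁) (h₂ : IsStrongIASL G₂ f₂)
    (hinj : Function.Injective (Sum.elim f₁ f₂)) :
    IsStrongIASL (joinGraph G₁ G₂) (Sum.elim f₁ f₂) ↔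
      ∀ (u : V₁) (v : V₂), Disjoint (diffSet (f₁ u)) (diffSet (f₂ v)) :=
  strongIASL_join_iff_general G₁ G₂ f₁ f₂ h₁ h₂ hinj
end

section
/- Let G be a simple graph on a finite vertex set with a strong integer additive set-labeling f, and let u, v, w be vertices with uv and vw edges of G, u ≠ w, and |f(v)| ≥ 2. Then the induced labels of the two adjacent edges violate the strongness condition: |(f(u) + f(v)) + (f(v) + f(w))| < |f(u) + f(v)| · |f(v) + f(w)|. (Consequently the line graph of a strong IASI-graph does not admit the induced strong IASI.) -/
open Finset Pointwise

/-!
Associativity and commutativity rewrite `(A + B) + (B + C)` as `(A + (B + B)) + C`, so its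
size is at most `|A| |B + B| |C|`. A set `B` with two distinct elements `a ≠ b` has
`|B + B| < |B|²`, since the pairs `(a, b)` and `(b, a)` have the same sum. For a strong labeling
the right-hand side `|f u + f v| |f v + f w|` is exactly `|A| |B|² |C|`.
-/

namespace Finset

theorem card_add_self_lt_mul_self {α : Type*} [AddCommMagma α] [DecidableEq α]
    {s : Finset α} (hs : 1 < #s) : #(s + s) < #s * #s := by
  obtain ⟨a, ha, b, hb, hab⟩ := one_lt_card.mp hs
  refine (card_image₂_le _ s s).lt_of_ne fun h => hab ?_
  have hinj := card_image₂_iff.mp h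
  exact congrArg Prod.fst <|
    hinj (by simp [ha, hb] : (a, b) ∈ (s ×ˢ s : Set (α × α)))
      (by simp [ha, hb] : (b, a) ∈ (s ×ˢ s : Set (α × α))) (add_comm a b)

theorem card_add_add_add_lt {α : Type*} [AddCommMonoid α] [DecidableEq α]
    {s t u : Finset α} (hs : s.Nonempty) (hu : u.Nonempty) (ht : 1 < #t) :
    #((s + t) + (t + u)) < (#s * #t) * (#t * #u) := by
  have hregroup : (s + t) + (t + u) = (s + (t + t)) + u := by
    rw [add_assoc, add_assoc, add_assoc]
  calc #((s + t) + (t + u)) = #((s + (t + t)) + u) := by rw [hregroup]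
    _ ≤ #(s + (t + t)) * #u := card_add_le
    _ ≤ (#s * #(t + t)) * #u := Nat.mul_le_mul_right _ card_add_le
    _ < (#s * (#t * #t)) * #u :=
        Nat.mul_lt_mul_of_lt_of_le
          (Nat.mul_lt_mul_of_pos_left (card_add_self_lt_mul_self ht) hs.card_pos) le_rfl
          hu.card_pos
    _ = (#s * #t) * (#t * #u) := by ring

end Finset

theorem adjacent_edge_labels_not_strong_general {V : Type*} (G : SimpleGraph V)
    (f : V → Finset ℕ) (hf : IsStrongIASL G f) (u v w : V)
    (huv : G.Adj u v) (hvw : G.Adj v w) (hv : 2 ≤ (f v).card) :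
    ((f u + f v) + (f v + f w)).card < (f u + f v).card * (f v + f w).card := by
  obtain ⟨hne, -, hstrong⟩ := hf
  rw [hstrong u v huv, hstrong v w hvw]
  exact card_add_add_add_lt (hne u) (hne w) hv

/-- For a strong IASL `f` of `G` and adjacent edges `uv`, `vw` with `|f(v)| ≥ 2`, the
induced labels of the two adjacent edges violate the strongness condition; consequently
the line graph of a strong IASI-graph does not admit the induced strong IASI. -/
theorem adjacent_edge_labels_not_strong {V : Type*} [Fintype V] (G : SimpleGraph V)
    (f : V → Finset ℕ) (hf : IsStrongIASL G f) (u v w : V)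
    (huv : G.Adj u v) (hvw : G.Adj v w) (huw : u ≠ w) (hv : 2 ≤ (f v).card) :
    ((f u + f v) + (f v + f w)).card < (f u + f v).card * (f v + f w).card :=
  adjacent_edge_labels_not_strong_general G f hf u v w huv hvw hv
end

section
/- For every positive integer k, every bipartite simple graph on a finite vertex set admits a strongly k-uniform integer additive set-indexer: there is an injective assignment f of nonempty finite sets of nonnegative integers to the vertices such that the induced edge labeling f⁺(uv) = f(u) + f(v) is injective on the edge set and |f⁺(uv)| = k = |f(u)|·|f(v)| for every edge uv. -/
/-!
Colour the graph with colours 0 and 1 and number the vertices injectively by `i : V → Fin n`.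
A vertex `u` of colour 0 gets the singleton `{i u}`, a vertex `v` of colour 1 the block of `k`
consecutive integers starting at `n * (i v + 1)`. Across an edge the sumset is the block of `k`
integers starting at `i u + n * (i v + 1)`, so it has `k = 1 * k` elements, and its least element
recovers `i u` and `i v` as remainder and quotient modulo `n`.
-/

open Finset Pointwise

theorem Nat.eq_of_Ico_add_eq_Ico_add {a b p q : ℕ} (hp : 0 < p) (hq : 0 < q)
    (h : Ico a (a + p) = Ico b (b + q)) : a = b := by
  have hab : a ∈ Ico b (b + q) := h ▸ left_mem_Ico.2 (by omega)
  have hba : b ∈ Ico a (a + p) := h ▸ left_mem_Ico.2 (by omega)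
  rw [mem_Ico] at hab hba
  omega

theorem Nat.singleton_add_Ico (a b c : ℕ) : ({a} : Finset ℕ) + Ico b c = Ico (a + b) (a + c) := by
  rw [singleton_add, ← image_vadd]
  exact image_add_left_Ico b c a

theorem Nat.add_mul_eq_add_mul_iff_of_lt {n a b c d : ℕ} (ha : a < n) (hc : c < n) :
    a + n * b = c + n * d ↔ a = c ∧ b = d := by
  refine ⟨fun h => ?_, by rintro ⟨rfl, rfl⟩; rfl⟩
  have decode : ∀ x y, x < n → (x + n * y) / n = y ∧ (x + n * y) % n = x :=
    fun x y hx => (Nat.div_mod_unique (by omega)).2 ⟨rfl, hx⟩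
  obtain ⟨hb, ha'⟩ := decode a b ha
  obtain ⟨hd, hc'⟩ := decode c d hc
  rw [h] at hb ha'
  exact ⟨ha'.symm.trans hc', hb.symm.trans hd⟩

theorem Fin.two_cases_of_ne {x y : Fin 2} (h : x ≠ y) : x = 0 ∧ y = 1 ∨ x = 1 ∧ y = 0 := by
  omega

section IntervalLabel

variable {V : Type*} {n : ℕ} (e : V ↪ Fin n) (c : V → Fin 2) (k : ℕ)

def startPoint (v : V) : ℕ :=
  if c v = 0 then e v else n * (e v + 1)

def intervalLabel (v : V) : Finset ℕ :=
  Ico (startPoint e c v) (startPoint e c v + if c v = 0 then 1 else k)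

variable {e c k}

theorem startPoint_injective : Function.Injective (startPoint e c) := by
  intro u v h
  have hn : ∀ w, (e w : ℕ) < n := fun w => (e w).isLt
  unfold startPoint at h
  apply e.injective
  split_ifs at h with hu hv hv
  · exact Fin.ext h
  · have := hn u; nlinarith
  · have := hn v; nlinarith
  · exact Fin.ext (by simpa using Nat.eq_of_mul_eq_mul_left (by have := hn u; omega) h)

theorem intervalLabel_nonempty (hk : 0 < k) (v : V) : (intervalLabel e c k v).Nonempty :=
  nonempty_Ico.2 (by split_ifs <;> omega)

theorem intervalLabel_injective (hk : 0 < k) : Function.Injective (intervalLabel e c k) :=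
  fun u v h => startPoint_injective
    (Nat.eq_of_Ico_add_eq_Ico_add (by split_ifs <;> omega) (by split_ifs <;> omega) h)

theorem intervalLabel_of_eq_zero {v : V} (hv : c v = 0) :
    intervalLabel e c k v = {startPoint e c v} := by
  rw [intervalLabel, if_pos hv, Nat.Ico_succ_singleton]

theorem intervalLabel_of_eq_one {v : V} (hv : c v = 1) :
    intervalLabel e c k v = Ico (startPoint e c v) (startPoint e c v + k) := by
  rw [intervalLabel, if_neg (by simp [hv])]

theorem intervalLabel_add_of_ne {u v : V} (h : c u ≠ c v) :
    intervalLabel e c k u + intervalLabel e c k v =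
      Ico (startPoint e c u + startPoint e c v) (startPoint e c u + startPoint e c v + k) := by
  rcases Fin.two_cases_of_ne h with ⟨hu, hv⟩ | ⟨hu, hv⟩
  · rw [intervalLabel_of_eq_zero hu, intervalLabel_of_eq_one hv, Nat.singleton_add_Ico, add_assoc]
  · rw [add_comm, intervalLabel_of_eq_zero hv, intervalLabel_of_eq_one hu, Nat.singleton_add_Ico]
    congr 1 <;> omega

theorem card_intervalLabel_mul_of_ne {u v : V} (h : c u ≠ c v) :
    (intervalLabel e c k u).card * (intervalLabel e c k v).card = k := by
  rcases Fin.two_cases_of_ne h with ⟨hu, hv⟩ | ⟨hu, hv⟩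
  · simp [intervalLabel_of_eq_zero hu, intervalLabel_of_eq_one hv]
  · simp [intervalLabel_of_eq_zero hv, intervalLabel_of_eq_one hu]

theorem startPoint_add_startPoint {u v : V} (hu : c u = 0) (hv : c v = 1) :
    startPoint e c u + startPoint e c v = e u + n * (e v + 1) := by
  simp [startPoint, hu, hv]

theorem eq_of_startPoint_add_eq {u v u' v' : V} (hu : c u = 0) (hv : c v = 1)
    (hu' : c u' = 0) (hv' : c v' = 1)
    (h : startPoint e c u + startPoint e c v = startPoint e c u' + startPoint e c v') :
    u = u' ∧ v = v' := by
  rw [startPoint_add_startPoint hu hv, startPoint_add_startPoint hu' hv',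
    Nat.add_mul_eq_add_mul_iff_of_lt (e u).isLt (e u').isLt] at h
  exact ⟨e.injective (Fin.ext h.1), e.injective (Fin.ext (by omega))⟩

theorem sym2_eq_of_startPoint_add_eq {u v u' v' : V} (huv : c u ≠ c v) (huv' : c u' ≠ c v')
    (h : startPoint e c u + startPoint e c v = startPoint e c u' + startPoint e c v') :
    s(u, v) = s(u', v') := by
  rw [Sym2.eq_iff]
  rcases Fin.two_cases_of_ne huv with ⟨hu, hv⟩ | ⟨hu, hv⟩ <;>
    rcases Fin.two_cases_of_ne huv' with ⟨hu', hv'⟩ | ⟨hu', hv'⟩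
  · exact .inl (eq_of_startPoint_add_eq (e := e) hu hv hu' hv' h)
  · exact .inr (eq_of_startPoint_add_eq (e := e) hu hv hv' hu' (by omega))
  · exact .inr (eq_of_startPoint_add_eq (e := e) hv hu hu' hv' (by omega)).symm
  · exact .inl (eq_of_startPoint_add_eq (e := e) hv hu hv' hu' (by omega)).symm

end IntervalLabel

theorem injOn_edgeLabel_intervalLabel {V : Type*} {n : ℕ} (e : V ↪ Fin n) {G : SimpleGraph V}
    (C : G.Coloring (Fin 2)) {k : ℕ} (hk : 0 < k) :
    Set.InjOn (edgeLabel (intervalLabel e C k)) G.edgeSet := by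
  intro d hd d' hd' h
  induction d using Sym2.ind with | _ u v => ?_
  induction d' using Sym2.ind with | _ u' v' => ?_
  have huv : C u ≠ C v := C.valid hd
  have huv' : C u' ≠ C v' := C.valid hd'
  simp only [edgeLabel, Sym2.lift_mk, intervalLabel_add_of_ne huv,
    intervalLabel_add_of_ne huv'] at h
  exact sym2_eq_of_startPoint_add_eq huv huv' (Nat.eq_of_Ico_add_eq_Ico_add hk hk h)

/-- For every positive integer `k`, every bipartite (2-colorable) graph on a finite
vertex set admits a strongly `k`-uniform integer additive set-indexer. -/
theorem bipartite_admits_strongly_uniform_IASI {V : Type*} [Fintype V]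
    (G : SimpleGraph V) (k : ℕ) (hk : 0 < k) (hbip : G.Colorable 2) :
    ∃ f : V → Finset ℕ, (∀ v, (f v).Nonempty) ∧ Function.Injective f ∧
      Set.InjOn (edgeLabel f) G.edgeSet ∧
      ∀ u v, G.Adj u v → (f u + f v).card = k ∧ k = (f u).card * (f v).card := by
  obtain ⟨C⟩ := hbip
  let e := (Fintype.equivFin V).toEmbedding
  refine ⟨intervalLabel e C k, intervalLabel_nonempty hk, intervalLabel_injective hk,
    injOn_edgeLabel_intervalLabel e C hk, fun u v huv => ⟨?_, ?_⟩⟩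
  · rw [intervalLabel_add_of_ne (C.valid huv), Nat.card_Ico, Nat.add_sub_cancel_left]
  · exact (card_intervalLabel_mul_of_ne (C.valid huv)).symm
end

section
/- Let n ≥ 3 and let f be a strongly k-uniform integer additive set-labeling of the complete graph K_n, i.e., f assigns injectively nonempty finite sets of nonnegative integers to the n vertices with |f(u) + f(v)| = k = |f(u)|·|f(v)| for every pair of distinct vertices u, v. Then k is a perfect square and f is (k, l)-completely uniform with l = √k: there is a positive integer l with k = l² and |f(v)| = l for every vertex v. -/
open Finset Pointwise

/- If `c u * c v = k` for all distinct `u, v`, then comparing `c u * c w` with `c v * c w` for a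
third point `w` cancels `c w`; so with at least three points `c` is constant, equal to some `l`,
and `k = l * l`. -/

section PairwiseProduct

variable {ι : Type*} {c : ι → ℕ} {k : ℕ}

theorem eq_of_mul_eq_of_ne_of_ne (hk : ∀ i j, i ≠ j → c i * c j = k) {u v w : ι}
    (hw : 0 < c w) (hu : u ≠ w) (hv : v ≠ w) : c u = c v :=
  Nat.eq_of_mul_eq_mul_right hw ((hk u w hu).trans (hk v w hv).symm)

theorem exists_const_of_pairwise_mul_eq (h3 : 3 ≤ Cardinal.mk ι) (hpos : ∀ i, 0 < c i)
    (hk : ∀ i j, i ≠ j → c i * c j = k) : ∃ l, 0 < l ∧ k = l ^ 2 ∧ ∀ i, c i = l := by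
  have hconst (u v : ι) : c u = c v := by
    obtain ⟨w, hwu, hwv⟩ := Cardinal.exists_ne_ne_of_three_le h3 u v
    exact eq_of_mul_eq_of_ne_of_ne hk (hpos w) hwu.symm hwv.symm
  obtain ⟨u, v, huv⟩ : Nontrivial ι :=
    Cardinal.one_lt_iff_nontrivial.mp (lt_of_lt_of_le (by norm_num) h3)
  refine ⟨c u, hpos u, ?_, fun i => hconst i u⟩
  rw [← hk u v huv, hconst v u, sq]

end PairwiseProduct

theorem strongly_uniform_IASL_completeGraph_completely_uniform_general
    (n k : ℕ) (hn : 3 ≤ n) (f : Fin n → Finset ℕ)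
    (hne : ∀ v, (f v).Nonempty)
    (hstrong : ∀ u v : Fin n, u ≠ v →
      (f u + f v).card = k ∧ k = (f u).card * (f v).card) :
    ∃ l : ℕ, 0 < l ∧ k = l ^ 2 ∧ ∀ v, (f v).card = l :=
  exists_const_of_pairwise_mul_eq (c := fun v => (f v).card)
    (by simpa [Cardinal.mk_fin] using hn) (fun v => (hne v).card_pos)
    (fun u v huv => ((hstrong u v huv).2).symm)

/-- A strongly `k`-uniform integer additive set-labeling of the complete graph `K_n`
(`n ≥ 3`) is `(k, l)`-completely uniform with `l = √k`: `k` is a perfect square and all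
vertex labels have cardinality `l = √k`. -/
theorem strongly_uniform_IASL_completeGraph_completely_uniform
    (n k : ℕ) (hn : 3 ≤ n) (f : Fin n → Finset ℕ)
    (hinj : Function.Injective f) (hne : ∀ v, (f v).Nonempty)
    (hstrong : ∀ u v : Fin n, u ≠ v →
      (f u + f v).card = k ∧ k = (f u).card * (f v).card) :
    ∃ l : ℕ, 0 < l ∧ k = l ^ 2 ∧ ∀ v, (f v).card = l :=
  strongly_uniform_IASL_completeGraph_completely_uniform_general n k hn f hne hstrong
end

section
/- Let G be a connected non-bipartite (i.e., not 2-colorable) simple graph on a finite vertex set and suppose G admits a strongly k-uniform integer additive set-labeling f. Then k is a perfect square and f is (k, l)-completely uniform with l = √k: there is a positive integer l with k = l² and |f(v)| = l for every vertex v of G. -/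
/-!
Write `g v = |f v|`, so that `g u * g v = k` on every edge. Along an edge `g` is replaced by
`k / g`, hence along a walk it returns to its starting value after an even number of steps and
becomes `k / g` after an odd number. A non-bipartite graph has an odd closed walk, at some `u`
say, which forces `g u * g u = k`; then `k / g u = g u`, and connectedness spreads this value of
`g` to every vertex.
-/

open Finset Pointwise

namespace SimpleGraph

variable {V M : Type*} [CommMonoidWithZero M] [IsLeftCancelMulZero M] {G : SimpleGraph V} {g : V → M} {k : M}

theorem Walk.apply_eq_of_even_and_mul_eq_of_odd (hg : ∀ v, g v ≠ 0)
    (hmul : ∀ u v, G.Adj u v → g u * g v = k) {u v : V} (p : G.Walk u v) :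
    (Even p.length → g v = g u) ∧ (Odd p.length → g u * g v = k) := by
  induction p with
  | nil => exact ⟨fun _ => rfl, fun h => absurd h (by simp)⟩
  | @cons u w v huw p ih =>
    rw [length_cons, Nat.even_add_one, Nat.odd_add_one, Nat.not_even_iff_odd, Nat.not_odd_iff_even]
    refine ⟨fun h => mul_left_cancel₀ (hg w) ?_, fun h => ?_⟩
    · rw [ih.2 h, ← hmul u w huw, mul_comm]
    · rw [ih.1 h, hmul u w huw]

theorem Connected.exists_forall_eq_of_not_colorable_two_of_adj_mul_eq (hconn : G.Connected)
    (hnb : ¬ G.Colorable 2) (hg : ∀ v, g v ≠ 0) (hmul : ∀ u v, G.Adj u v → g u * g v = k) :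
    ∃ l, l ≠ 0 ∧ k = l * l ∧ ∀ v, g v = l := by
  obtain ⟨u, loop, hodd⟩ : ∃ u, ∃ w : G.Walk u u, Odd w.length := by
    simpa [two_colorable_iff_forall_loop_even] using hnb
  have hk : k = g u * g u := ((loop.apply_eq_of_even_and_mul_eq_of_odd hg hmul).2 hodd).symm
  refine ⟨g u, hg u, hk, fun v => ?_⟩
  have parity := (hconn u v).some.apply_eq_of_even_and_mul_eq_of_odd hg hmul
  rcases Nat.even_or_odd (hconn u v).some.length with h | h
  · exact parity.1 h
  · exact mul_left_cancel₀ (hg u) ((parity.2 h).trans hk)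

end SimpleGraph

theorem strongly_uniform_IASL_connected_nonbipartite_completely_uniform_general
    {V : Type*} (G : SimpleGraph V)
    (hconn : G.Connected) (hnb : ¬ G.Colorable 2)
    (k : ℕ) (f : V → Finset ℕ)
    (hne : ∀ v, (f v).Nonempty)
    (hstrong : ∀ u v, G.Adj u v →
      (f u + f v).card = k ∧ k = (f u).card * (f v).card) :
    ∃ l : ℕ, 0 < l ∧ k = l ^ 2 ∧ ∀ v, (f v).card = l := by
  obtain ⟨l, hl, hk, hcard⟩ := hconn.exists_forall_eq_of_not_colorable_two_of_adj_mul_eq hnb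
    (fun v => (hne v).card_ne_zero) (fun u v huv => (hstrong u v huv).2.symm)
  exact ⟨l, Nat.pos_of_ne_zero hl, hk.trans (sq l).symm, hcard⟩

/-- If a connected non-bipartite graph admits a strongly `k`-uniform integer additive
set-labeling `f`, then `k` is a perfect square and `f` is `(k, l)`-completely uniform
with `l = √k`. -/
theorem strongly_uniform_IASL_connected_nonbipartite_completely_uniform
    {V : Type*} [Fintype V] (G : SimpleGraph V)
    (hconn : G.Connected) (hnb : ¬ G.Colorable 2)
    (k : ℕ) (f : V → Finset ℕ)
    (hinj : Function.Injective f) (hne : ∀ v, (f v).Nonempty)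
    (hstrong : ∀ u v, G.Adj u v →
      (f u + f v).card = k ∧ k = (f u).card * (f v).card) :
    ∃ l : ℕ, 0 < l ∧ k = l ^ 2 ∧ ∀ v, (f v).card = l :=
  strongly_uniform_IASL_connected_nonbipartite_completely_uniform_general G hconn hnb k f hne
    hstrong
end

section
/- Let k be a positive integer that is not a perfect square. A simple graph G on a finite vertex set admits a strongly k-uniform integer additive set-indexer if and only if G is bipartite (i.e., 2-colorable). -/
open Finset Pointwise

/-
Colour each vertex by whether `|f v|²` is below `k`. On an edge `|f u| · |f v| = k` is not a
square, so exactly one endpoint lies below `√k`: this is a proper 2-colouring. Conversely, given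
a 2-colouring and an injection `g` of the vertices into `[0, M)`, label one colour class by the
singletons `{g u}` and the other by the blocks `M · g v + [0, k)`. Every edge then gets the block
`g u + M · g v + [0, k)` of size `k = 1 · k`, and base-`M` digits recover both endpoints.
-/

def IsStronglyUniformIASI {V : Type*} (G : SimpleGraph V) (k : ℕ) (f : V → Finset ℕ) : Prop :=
  (∀ v, (f v).Nonempty) ∧ Function.Injective f ∧ Set.InjOn (edgeLabel f) G.edgeSet ∧
    ∀ u v, G.Adj u v → (f u + f v).card = k ∧ k = (f u).card * (f v).card

theorem SimpleGraph.colorable_two_of_mul_eq_of_not_isSquare {V : Type*} {G : SimpleGraph V}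
    {k : ℕ} (hk : ¬ IsSquare k) (w : V → ℕ) (hw : ∀ u v, G.Adj u v → w u * w v = k) :
    G.Colorable 2 := by
  refine ⟨Coloring.mk (fun v => if w v * w v < k then (0 : Fin 2) else 1) ?_⟩
  intro u v huv hcol
  have hsq : ∀ v, w v * w v ≠ k := fun v h => hk ⟨w v, h.symm⟩
  have hu := hsq u
  have hv := hsq v
  rw [← hw u v huv] at hu hv hcol
  split_ifs at hcol with hu' hv' hv'
  · exact lt_asymm (Nat.lt_of_mul_lt_mul_left hu') (Nat.lt_of_mul_lt_mul_right hv')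
  · exact absurd hcol (by decide)
  · exact absurd hcol (by decide)
  · exact lt_asymm (Nat.lt_of_mul_lt_mul_left (lt_of_le_of_ne (not_lt.1 hu') hu.symm))
      (Nat.lt_of_mul_lt_mul_right (lt_of_le_of_ne (not_lt.1 hv') hv.symm))

theorem IsStronglyUniformIASI.colorable_two {V : Type*} {G : SimpleGraph V} {k : ℕ}
    {f : V → Finset ℕ} (hf : IsStronglyUniformIASI G k f) (hk : ¬ IsSquare k) :
    G.Colorable 2 :=
  SimpleGraph.colorable_two_of_mul_eq_of_not_isSquare hk (fun v => (f v).card)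
    fun u v huv => ((hf.2.2.2 u v huv).2).symm

theorem one_lt_of_not_isSquare {k : ℕ} (hk : ¬ IsSquare k) : 1 < k := by
  by_contra! h
  interval_cases k
  · exact hk ⟨0, rfl⟩
  · exact hk ⟨1, rfl⟩

theorem singleton_add_range_injective {k : ℕ} (hk : 0 < k) :
    Function.Injective fun a : ℕ => ({a} : Finset ℕ) + range k := by
  have hle : ∀ a b, ({a} : Finset ℕ) + range k = {b} + range k → b ≤ a := by
    intro a b h
    have ha : a ∈ ({b} : Finset ℕ) + range k := h ▸ add_mem_add (mem_singleton_self a)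
      (mem_range.2 hk)
    obtain ⟨_, hb, i, -, rfl⟩ := mem_add.1 ha
    rw [mem_singleton.1 hb]
    exact Nat.le_add_right b i
  exact fun a b h => le_antisymm (hle b a h.symm) (hle a b h)

theorem eq_and_eq_of_add_mul_eq {M a b a' b' : ℕ} (ha : a < M) (ha' : a' < M)
    (h : a + M * b = a' + M * b') : a = a' ∧ b = b' := by
  have hM : 0 < M := Nat.zero_lt_of_lt ha
  refine ⟨?_, ?_⟩
  · simpa [Nat.add_mul_mod_self_left, Nat.mod_eq_of_lt ha, Nat.mod_eq_of_lt ha'] using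
      congrArg (· % M) h
  · simpa [Nat.add_mul_div_left _ _ hM, Nat.div_eq_of_lt ha, Nat.div_eq_of_lt ha'] using
      congrArg (· / M) h

section BipartiteLabel

variable {V : Type*} (C : V → Fin 2) (g : V → ℕ) (M k : ℕ)

def bipartiteLabel (v : V) : Finset ℕ :=
  if C v = 0 then {g v} else {M * g v} + range k

variable {C g M k}

theorem bipartiteLabel_add {u v : V} (hu : C u = 0) (hv : C v ≠ 0) :
    bipartiteLabel C g M k u + bipartiteLabel C g M k v = {g u + M * g v} + range k := by
  simp only [bipartiteLabel, if_pos hu, if_neg hv, ← add_assoc, singleton_add_singleton]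

theorem card_bipartiteLabel_of_eq_zero {v : V} (hv : C v = 0) :
    (bipartiteLabel C g M k v).card = 1 := by
  simp [bipartiteLabel, hv]

theorem card_bipartiteLabel_of_ne_zero {v : V} (hv : C v ≠ 0) :
    (bipartiteLabel C g M k v).card = k := by
  simp [bipartiteLabel, hv, card_singleton_add]

theorem card_bipartiteLabel_add {u v : V} (hu : C u = 0) (hv : C v ≠ 0) :
    (bipartiteLabel C g M k u + bipartiteLabel C g M k v).card = k ∧
      k = (bipartiteLabel C g M k u).card * (bipartiteLabel C g M k v).card := by
  rw [bipartiteLabel_add hu hv, card_singleton_add, card_range,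
    card_bipartiteLabel_of_eq_zero hu, card_bipartiteLabel_of_ne_zero hv, one_mul]
  exact ⟨rfl, rfl⟩

theorem bipartiteLabel_nonempty (hk : 0 < k) (v : V) : (bipartiteLabel C g M k v).Nonempty := by
  unfold bipartiteLabel
  split_ifs
  exacts [singleton_nonempty _, (singleton_nonempty _).add (nonempty_range_iff.2 hk.ne')]

theorem bipartiteLabel_injective (hg : Function.Injective g) (hgM : ∀ v, g v < M)
    (hk : 1 < k) : Function.Injective (bipartiteLabel C g M k) := by
  have hcard : ∀ v, (bipartiteLabel C g M k v).card = 1 ↔ C v = 0 := fun v => by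
    by_cases hv : C v = 0
    · simp [card_bipartiteLabel_of_eq_zero hv, hv]
    · simp [card_bipartiteLabel_of_ne_zero hv, hv, hk.ne']
  intro u v huv
  have hC : C u = 0 ↔ C v = 0 := by rw [← hcard, ← hcard, huv]
  by_cases hu : C u = 0
  · simp only [bipartiteLabel, if_pos hu, if_pos (hC.1 hu), singleton_inj] at huv
    exact hg huv
  · simp only [bipartiteLabel, if_neg hu, if_neg (mt hC.2 hu)] at huv
    exact hg (Nat.eq_of_mul_eq_mul_left (Nat.zero_lt_of_lt (hgM u))
      (singleton_add_range_injective (Nat.zero_lt_of_lt hk) huv))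

theorem bipartiteLabel_add_injective (hg : Function.Injective g) (hgM : ∀ v, g v < M)
    (hk : 0 < k) {u v u' v' : V} (hu : C u = 0) (hv : C v ≠ 0) (hu' : C u' = 0)
    (hv' : C v' ≠ 0)
    (h : bipartiteLabel C g M k u + bipartiteLabel C g M k v =
      bipartiteLabel C g M k u' + bipartiteLabel C g M k v') :
    u = u' ∧ v = v' := by
  rw [bipartiteLabel_add hu hv, bipartiteLabel_add hu' hv'] at h
  obtain ⟨hgu, hgv⟩ := eq_and_eq_of_add_mul_eq (hgM u) (hgM u')
    (singleton_add_range_injective hk h)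
  exact ⟨hg hgu, hg hgv⟩

end BipartiteLabel

theorem SimpleGraph.Coloring.fin_two_cases {V : Type*} {G : SimpleGraph V}
    (C : G.Coloring (Fin 2)) {u v : V} (huv : G.Adj u v) :
    (C u = 0 ∧ C v ≠ 0) ∨ (C v = 0 ∧ C u ≠ 0) := by
  have := C.valid huv
  omega

theorem SimpleGraph.Coloring.exists_eq_mk_of_mem_edgeSet {V : Type*} {G : SimpleGraph V}
    (C : G.Coloring (Fin 2)) {e : Sym2 V} (he : e ∈ G.edgeSet) :
    ∃ u v, C u = 0 ∧ C v ≠ 0 ∧ e = s(u, v) := by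
  induction e using Sym2.ind with | _ u v => ?_
  rcases C.fin_two_cases he with ⟨hu, hv⟩ | ⟨hv, hu⟩
  exacts [⟨u, v, hu, hv, rfl⟩, ⟨v, u, hv, hu, Sym2.eq_swap⟩]

theorem isStronglyUniformIASI_bipartiteLabel {V : Type*} {G : SimpleGraph V}
    (C : G.Coloring (Fin 2)) {g : V → ℕ} (hg : Function.Injective g) {M k : ℕ}
    (hgM : ∀ v, g v < M) (hk : 1 < k) :
    IsStronglyUniformIASI G k (bipartiteLabel C g M k) := by
  have hk0 : 0 < k := Nat.zero_lt_of_lt hk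
  refine ⟨bipartiteLabel_nonempty hk0, bipartiteLabel_injective hg hgM hk, ?_,
    fun u v huv => ?_⟩
  · intro e₁ he₁ e₂ he₂ h
    obtain ⟨u₁, v₁, hu₁, hv₁, rfl⟩ := C.exists_eq_mk_of_mem_edgeSet he₁
    obtain ⟨u₂, v₂, hu₂, hv₂, rfl⟩ := C.exists_eq_mk_of_mem_edgeSet he₂
    obtain ⟨rfl, rfl⟩ := bipartiteLabel_add_injective hg hgM hk0 hu₁ hv₁ hu₂ hv₂ h
    rfl
  · rcases C.fin_two_cases huv with ⟨hu, hv⟩ | ⟨hv, hu⟩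
    · exact card_bipartiteLabel_add hu hv
    · rw [add_comm, mul_comm]
      exact card_bipartiteLabel_add hv hu

theorem exists_isStronglyUniformIASI_of_colorable {V : Type*} [Finite V] {G : SimpleGraph V}
    {k : ℕ} (hk : 1 < k) (hG : G.Colorable 2) : ∃ f, IsStronglyUniformIASI G k f := by
  obtain ⟨C⟩ := hG
  obtain ⟨n, ⟨e⟩⟩ := Finite.exists_equiv_fin V
  exact ⟨_, isStronglyUniformIASI_bipartiteLabel C (g := fun v => e v)
    (fun _ _ h => e.injective (Fin.ext h)) (fun v => (e v).isLt) hk⟩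

theorem admits_strongly_uniform_IASI_iff_bipartite_general {V : Type*} [Fintype V]
    (G : SimpleGraph V) (k : ℕ) (hns : ¬ IsSquare k) :
    (∃ f : V → Finset ℕ, (∀ v, (f v).Nonempty) ∧ Function.Injective f ∧
        Set.InjOn (edgeLabel f) G.edgeSet ∧
        ∀ u v, G.Adj u v → (f u + f v).card = k ∧ k = (f u).card * (f v).card) ↔
      G.Colorable 2 :=
  ⟨fun ⟨_, hf⟩ => IsStronglyUniformIASI.colorable_two hf hns,
    exists_isStronglyUniformIASI_of_colorable (one_lt_of_not_isSquare hns)⟩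

/-- For a positive integer `k` that is not a perfect square, a graph admits a strongly
`k`-uniform integer additive set-indexer iff it is bipartite (2-colorable). -/
theorem admits_strongly_uniform_IASI_iff_bipartite {V : Type*} [Fintype V]
    (G : SimpleGraph V) (k : ℕ) (hk : 0 < k) (hns : ¬ IsSquare k) :
    (∃ f : V → Finset ℕ, (∀ v, (f v).Nonempty) ∧ Function.Injective f ∧
        Set.InjOn (edgeLabel f) G.edgeSet ∧
        ∀ u v, G.Adj u v → (f u + f v).card = k ∧ k = (f u).card * (f v).card) ↔
      G.Colorable 2 :=
  admits_strongly_uniform_IASI_iff_bipartite_general G k hns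
end
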